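/- arXiv:2605.14015 — 4 statements merged into one kernel-verified Lean document; each statement's English description precedes it below -/
import Mathlib

section
/- Let q be a prime, N ≥ 1, and fix an index i ∈ {1,…,N}. Let h be a nonzero multilinear polynomial over F_q in the N−1 variables x_j (j ≠ i), let R be an arbitrary F_q-valued function of these N−1 variables, and define Q(x₁,…,x_N) = x_i·h(x_{≠i}) + R(x_{≠i}). Then for every λ ∈ F_q with λ ≠ 0, the Fourier coefficient satisfies |E_{x uniform on F_q^N} ψ(λ·Q(x))| ≤ Pr_{x uniform}[h(x_{≠i}) = 0] ≤ (N−1)/q. -/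
/-!
Summing first over the coordinate `x i`, the inner sum `∑ₜ ψ(λ(t·h(y) + R(y)))` vanishes when
`h(y) ≠ 0` (as `ψ` is primitive) and has modulus `q` when `h(y) = 0`, so the Fourier coefficient
is bounded by the density of zeros of `h`. A multilinear polynomial in `N - 1` variables has total
degree at most `N - 1`, so by the Schwartz–Zippel lemma that density is at most `(N - 1)/q`.
-/

/-- The standard additive character `ψ : F_q → ℂ`, `ψ(t) = exp(2πi·t̃/q)` where
`t̃ ∈ {0,…,q−1}` is the canonical representative of `t`. -/
noncomputable def stdChar (q : ℕ) [NeZero q] (t : ZMod q) : ℂ :=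
  Complex.exp (2 * Real.pi * Complex.I * (t.val : ℂ) / (q : ℂ))

open Finset MvPolynomial

namespace MvPolynomial

variable {R σ : Type*} [CommRing R]

theorem totalDegree_le_mul_card_of_mem_restrictDegree [Fintype σ] {p : MvPolynomial σ R} {m : ℕ}
    (hp : p ∈ restrictDegree σ R m) : p.totalDegree ≤ m * Fintype.card σ := by
  rw [mem_restrictDegree] at hp
  refine Finset.sup_le fun s hs => ?_
  rw [Finsupp.sum_fintype _ _ (fun _ => rfl), mul_comm, ← smul_eq_mul, ← Finset.card_univ]
  exact Finset.sum_le_card_nsmul _ _ _ fun j _ => hp s hs j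

theorem schwartz_zippel_totalDegree_univ [IsDomain R] [Fintype R] [DecidableEq R] [Fintype σ]
    [DecidableEq σ] {p : MvPolynomial σ R} (hp : p ≠ 0) :
    #{x : σ → R | eval x p = 0} * Fintype.card R ≤
      p.totalDegree * Fintype.card R ^ Fintype.card σ := by
  set e := Fintype.equivFin σ
  have hp' : rename e p ≠ 0 := by
    rwa [Ne, ← map_zero (rename e), (rename_injective _ e.injective).eq_iff]
  have hzeros : #{x : Fin (Fintype.card σ) → R | eval x (rename e p) = 0} =
      #{x : σ → R | eval x p = 0} := by
    simp only [card_filter, eval_rename]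
    exact Fintype.sum_equiv (e.arrowCongr (Equiv.refl R)).symm _ _ fun x => rfl
  have hSZ := schwartz_zippel_totalDegree hp' univ
  rw [Fintype.piFinset_univ, hzeros, card_univ,
    div_le_div_iff₀ (by positivity) (by positivity)] at hSZ
  have hdeg := totalDegree_rename_le e p
  calc #{x : σ → R | eval x p = 0} * Fintype.card R
      ≤ (rename e p).totalDegree * Fintype.card R ^ Fintype.card σ := by exact_mod_cast hSZ
    _ ≤ _ := by gcongr

end MvPolynomial

namespace AddChar

variable {R K : Type*} [CommRing R] [Fintype R] [DecidableEq R] [RCLike K] {ψ : AddChar R K}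

theorem sum_mul_add (hψ : ψ.IsPrimitive) (g r : R) :
    ∑ t, ψ (t * g + r) = if g = 0 then (Fintype.card R : K) * ψ r else 0 := by
  simp_rw [map_add_eq_mul, ← Finset.sum_mul, sum_mulShift g hψ]
  split_ifs <;> simp

end AddChar

section SplitAt

variable {ι F : Type*} [DecidableEq ι] (i : ι)

@[simp]
theorem Equiv.funSplitAt_symm_apply_self (t : F) (y : {j // j ≠ i} → F) :
    (Equiv.funSplitAt i F).symm (t, y) i = t := by
  simp [Equiv.funSplitAt_symm_apply]

@[simp]
theorem Equiv.funSplitAt_symm_apply_coe (t : F) (y : {j // j ≠ i} → F) (j : {j // j ≠ i}) :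
    (Equiv.funSplitAt i F).symm (t, y) j = y j := by
  simp [Equiv.funSplitAt_symm_apply, j.2]

variable [Fintype ι] [Fintype F]

theorem Fintype.sum_eq_sum_funSplitAt {M : Type*} [AddCommMonoid M] (f : (ι → F) → M) :
    ∑ x, f x = ∑ y : {j // j ≠ i} → F, ∑ t, f ((Equiv.funSplitAt i F).symm (t, y)) := by
  rw [← (Equiv.funSplitAt i F).symm.sum_comp, Fintype.sum_prod_type, Finset.sum_comm]

theorem card_filter_restrict_ne (P : ({j // j ≠ i} → F) → Prop) [DecidablePred P] :
    #{x : ι → F | P fun j => x j} = Fintype.card F * #{y | P y} := by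
  rw [card_filter, card_filter, Fintype.sum_eq_sum_funSplitAt i, mul_sum]
  simp only [Equiv.funSplitAt_symm_apply_coe, sum_const, card_univ, smul_eq_mul]

end SplitAt

theorem AddChar.norm_sum_mul_add_le {ι F K : Type*} [DecidableEq ι] [Fintype ι] [CommRing F]
    [Fintype F] [DecidableEq F] [RCLike K] {ψ : AddChar F K} (hψ : ψ.IsPrimitive) (i : ι)
    (g r : ({j // j ≠ i} → F) → F) :
    ‖∑ x : ι → F, ψ (x i * g (fun j => x j) + r (fun j => x j))‖ ≤
      Fintype.card F * #{y | g y = 0} := by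
  rw [Fintype.sum_eq_sum_funSplitAt i]
  simp only [Equiv.funSplitAt_symm_apply_self, Equiv.funSplitAt_symm_apply_coe,
    AddChar.sum_mul_add hψ]
  calc _ ≤ ∑ y, ‖if g y = 0 then (Fintype.card F : K) * ψ (r y) else 0‖ := norm_sum_le _ _
    _ = ∑ y, if g y = 0 then (Fintype.card F : ℝ) else 0 := by
      congr 1 with y
      split_ifs <;> simp
    _ = _ := by rw [sum_ite, sum_const_zero, add_zero, sum_const, nsmul_eq_mul, mul_comm]

theorem stdChar_eq_stdAddChar (q : ℕ) [NeZero q] : stdChar q = ZMod.stdAddChar := by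
  funext t
  rw [stdChar, ZMod.stdAddChar_apply, ZMod.toCircle_apply]

theorem stmt_9_general (q N : ℕ) [Fact (Nat.Prime q)] (i : Fin N)
    (h : MvPolynomial {j : Fin N // j ≠ i} (ZMod q))
    (hml : ∀ s ∈ h.support, ∀ j, s j ≤ 1) (hne : h ≠ 0)
    (R : ({j : Fin N // j ≠ i} → ZMod q) → ZMod q)
    (Q : (Fin N → ZMod q) → ZMod q)
    (hQ : ∀ x : Fin N → ZMod q,
      Q x = x i * MvPolynomial.eval (fun j => x j.1) h + R (fun j => x j.1))
    (lam : ZMod q) (hlam : lam ≠ 0) :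
    ‖(∑ x : Fin N → ZMod q, stdChar q (lam * Q x)) / (q : ℂ) ^ N‖
        ≤ ((Finset.univ.filter
              (fun x : Fin N → ZMod q =>
                MvPolynomial.eval (fun j => x j.1) h = 0)).card : ℝ) / (q : ℝ) ^ N ∧
      ((Finset.univ.filter
          (fun x : Fin N → ZMod q =>
            MvPolynomial.eval (fun j => x j.1) h = 0)).card : ℝ) / (q : ℝ) ^ N
        ≤ ((N : ℝ) - 1) / (q : ℝ) := by
  obtain ⟨n, rfl⟩ : ∃ n, N = n + 1 := ⟨N - 1, by have := i.pos; omega⟩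
  have hq : 0 < q := (Fact.out : q.Prime).pos
  set Z := #{y | eval y h = 0}
  have hcount : #{x : Fin (n + 1) → ZMod q | eval (fun j => x j.1) h = 0} = q * Z := by
    rw [card_filter_restrict_ne i (fun y => eval y h = 0), ZMod.card]
  have hfourier : ‖∑ x, stdChar q (lam * Q x)‖ ≤ q * Z := by
    have hQ' : ∀ x, lam * Q x =
        x i * (lam * eval (fun j => x j.1) h) + lam * R (fun j => x j.1) :=
      fun x => by rw [hQ]; ring
    simpa [hQ', hlam, stdChar_eq_stdAddChar] using
      AddChar.norm_sum_mul_add_le (ZMod.isPrimitive_stdAddChar q) i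
        (fun y => lam * eval y h) (fun y => lam * R y)
  have hdeg : h.totalDegree ≤ n := by
    simpa [Fintype.card_subtype_compl] using
      totalDegree_le_mul_card_of_mem_restrictDegree ((mem_restrictDegree ..).2 hml)
  have hzeros : (Z * q : ℝ) ≤ n * q ^ n := by
    have := (schwartz_zippel_totalDegree_univ hne).trans (Nat.mul_le_mul_right _ hdeg)
    simp only [Fintype.card_subtype_compl, Fintype.card_fin, Fintype.card_unique, ZMod.card,
      add_tsub_cancel_right] at this
    exact_mod_cast this
  rw [hcount]
  constructor
  · rw [norm_div, norm_pow, Complex.norm_natCast]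
    gcongr
    exact_mod_cast hfourier
  · rw [div_le_div_iff₀ (by positivity) (by positivity), pow_succ]
    push_cast
    nlinarith

/-- if `Q(x₁,…,x_N) = x_i·h(x_{≠i}) + R(x_{≠i})` with `h` a nonzero
multilinear polynomial in the variables `x_j (j ≠ i)` and `R` arbitrary, then for every
`λ ≠ 0` the Fourier coefficient satisfies
`|E_x ψ(λ·Q(x))| ≤ Pr_x[h(x_{≠i}) = 0] ≤ (N−1)/q`. -/
theorem stmt_9 (q N : ℕ) [Fact (Nat.Prime q)] (hN : 1 ≤ N) (i : Fin N)
    (h : MvPolynomial {j : Fin N // j ≠ i} (ZMod q))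
    (hml : ∀ s ∈ h.support, ∀ j, s j ≤ 1) (hne : h ≠ 0)
    (R : ({j : Fin N // j ≠ i} → ZMod q) → ZMod q)
    (Q : (Fin N → ZMod q) → ZMod q)
    (hQ : ∀ x : Fin N → ZMod q,
      Q x = x i * MvPolynomial.eval (fun j => x j.1) h + R (fun j => x j.1))
    (lam : ZMod q) (hlam : lam ≠ 0) :
    ‖(∑ x : Fin N → ZMod q, stdChar q (lam * Q x)) / (q : ℂ) ^ N‖
        ≤ ((Finset.univ.filter
              (fun x : Fin N → ZMod q =>
                MvPolynomial.eval (fun j => x j.1) h = 0)).card : ℝ) / (q : ℝ) ^ N ∧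
      ((Finset.univ.filter
          (fun x : Fin N → ZMod q =>
            MvPolynomial.eval (fun j => x j.1) h = 0)).card : ℝ) / (q : ℝ) ^ N
        ≤ ((N : ℝ) - 1) / (q : ℝ) :=
  stmt_9_general q N i h hml hne R Q hQ lam hlam
end

section
/- Let q be a prime, N ≥ 1, F : F_q^N → F_q an N-variate polynomial function over F_q, and a ∈ F_q. Suppose Σ_{x ∈ {0,1}^N} F(x) = a. Then for every choice of (r₁,…,r_N) ∈ F_q^N, the honest Sumcheck polynomials g₁,…,g_N satisfy all verifier checks: g₁(0) + g₁(1) = a; g_i(0) + g_i(1) = g_{i−1}(r_{i−1}) for every 2 ≤ i ≤ N; and g_N(r_N) = F(r₁,…,r_N). -/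
noncomputable def honestG (q N : ℕ) [NeZero q]
    (F : (Fin N → ZMod q) → ZMod q) (r : Fin N → ZMod q) (i : Fin N) (X : ZMod q) :
    ZMod q :=
  ∑ t : {j : Fin N // i < j} → Bool,
    F fun j =>
      if h1 : j < i then r j
      else if h2 : j = i then X
      else if t ⟨j, lt_of_le_of_ne (not_lt.mp h1) (Ne.symm h2)⟩ then 1 else 0

lemma sum_merge (q N : ℕ) [NeZero q]
    (F : (Fin N → ZMod q) → ZMod q) (r : Fin N → ZMod q) (i : Fin N) :
    honestG q N F r i 0 + honestG q N F r i 1 =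
      ∑ t : {j : Fin N // i ≤ j} → Bool,
        F fun j => if h : j < i then r j else if t ⟨j, not_lt.mp h⟩ then 1 else 0 := by
  classical
  let e : ({j : Fin N // i ≤ j} → Bool) ≃ Bool × ({j : Fin N // i < j} → Bool) :=
    { toFun := fun t => (t ⟨i, le_refl i⟩, fun j => t ⟨j.1, le_of_lt j.2⟩)
      invFun := fun p j => if h : i < j.1 then p.2 ⟨j.1, h⟩ else p.1
      left_inv := fun t => by
        funext j
        by_cases h : i < j.1
        · simp [h]
        · have hj : j.1 = i := le_antisymm (not_lt.mp h) j.2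
          simp only [h, dif_neg, not_false_iff]
          congr 1
          exact Subtype.ext hj.symm
      right_inv := fun p => by
        refine Prod.ext ?_ ?_
        · simp
        · funext j
          simp [j.2] }
  have key : ∀ t : {j : Fin N // i ≤ j} → Bool,
      (F fun j => if h : j < i then r j else if t ⟨j, not_lt.mp h⟩ then 1 else 0) =
      (fun p : Bool × ({j : Fin N // i < j} → Bool) =>
        F fun j => if h : j < i then r j
          else if (if h2 : i < j then p.2 ⟨j, h2⟩ else p.1) then 1 else 0) (e t) := by
    intro t
    show F _ = F _
    congr 1
    funext j
    by_cases h1 : j < i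
    · rw [dif_pos h1, dif_pos h1]
    · rw [dif_neg h1, dif_neg h1]
      by_cases h2 : i < j
      · rw [dif_pos h2]
        rfl
      · have hj : j = i := le_antisymm (not_lt.mp h2) (not_lt.mp h1)
        rw [dif_neg h2]
        have hst : (⟨j, not_lt.mp h1⟩ : {j : Fin N // i ≤ j}) = ⟨i, le_refl i⟩ :=
          Subtype.ext hj
        show (if t ⟨j, not_lt.mp h1⟩ then (1 : ZMod q) else 0) =
          (if t ⟨i, le_refl i⟩ then 1 else 0)
        rw [hst]
  have h2 := Equiv.sum_comp e (fun p : Bool × ({j : Fin N // i < j} → Bool) =>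
    F fun j => if h : j < i then r j
      else if (if h2 : i < j then p.2 ⟨j, h2⟩ else p.1) then 1 else 0)
  rw [Fintype.sum_congr _ _ key, h2]
  rw [Fintype.sum_prod_type, Fintype.sum_bool, add_comm]
  congr 1
  · unfold honestG
    refine Finset.sum_congr rfl fun t _ => ?_
    congr 1
    funext j
    by_cases h1 : j < i
    · rw [dif_pos h1, dif_pos h1]
    · rw [dif_neg h1, dif_neg h1]
      by_cases h2 : j = i
      · have h3 : ¬ i < j := by rw [h2]; exact lt_irrefl i
        rw [dif_pos h2, dif_neg h3]
        rfl
      · have h3 : i < j := lt_of_le_of_ne (not_lt.mp h1) (Ne.symm h2)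
        rw [dif_neg h2, dif_pos h3]
  · unfold honestG
    refine Finset.sum_congr rfl fun t _ => ?_
    congr 1
    funext j
    by_cases h1 : j < i
    · rw [dif_pos h1, dif_pos h1]
    · rw [dif_neg h1, dif_neg h1]
      by_cases h2 : j = i
      · have h3 : ¬ i < j := by rw [h2]; exact lt_irrefl i
        rw [dif_pos h2, dif_neg h3]
        rfl
      · have h3 : i < j := lt_of_le_of_ne (not_lt.mp h1) (Ne.symm h2)
        rw [dif_neg h2, dif_pos h3]

/-- Sumcheck completeness: if `F : F_q^N → F_q` is a polynomial
function with `Σ_{x ∈ {0,1}^N} F(x) = a`, then for every choice of `(r₁,…,r_N)` the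
honest Sumcheck polynomials `g₁,…,g_N` satisfy all verifier checks:
`g₁(0) + g₁(1) = a`; `g_i(0) + g_i(1) = g_{i−1}(r_{i−1})` for `2 ≤ i ≤ N`; and
`g_N(r_N) = F(r₁,…,r_N)`. -/
theorem stmt_15 (q N : ℕ) [Fact (Nat.Prime q)] (hN : 1 ≤ N)
    (F : (Fin N → ZMod q) → ZMod q)
    (hpoly : ∃ p : MvPolynomial (Fin N) (ZMod q), ∀ x, F x = MvPolynomial.eval x p)
    (a : ZMod q)
    (ha : ∑ x : Fin N → Bool, F (fun j => if x j then 1 else 0) = a)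
    (r : Fin N → ZMod q) :
    honestG q N F r ⟨0, hN⟩ 0 + honestG q N F r ⟨0, hN⟩ 1 = a ∧
      (∀ i : Fin N, 0 < i.val →
        honestG q N F r i 0 + honestG q N F r i 1 =
          honestG q N F r ⟨i.val - 1, Nat.lt_of_le_of_lt (Nat.sub_le _ _) i.isLt⟩
            (r ⟨i.val - 1, Nat.lt_of_le_of_lt (Nat.sub_le _ _) i.isLt⟩)) ∧
      honestG q N F r ⟨N - 1, Nat.sub_lt hN Nat.one_pos⟩
          (r ⟨N - 1, Nat.sub_lt hN Nat.one_pos⟩)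
        = F r := by
  classical
  refine ⟨?_, ?_, ?_⟩
  · rw [sum_merge, ← ha]
    refine Fintype.sum_equiv
      (Equiv.arrowCongr (Equiv.subtypeUnivEquiv (fun j => by
        show (0 : ℕ) ≤ j.1; exact Nat.zero_le _)) (Equiv.refl Bool)) _ _ ?_
    intro t
    congr 1
  · intro i hi
    rw [sum_merge]
    set i' : Fin N := ⟨i.val - 1, Nat.lt_of_le_of_lt (Nat.sub_le _ _) i.isLt⟩ with hi'
    have hval : i'.1 = i.1 - 1 := rfl
    unfold honestG
    refine Fintype.sum_equiv
      (Equiv.arrowCongr (Equiv.subtypeEquivRight (fun j => by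
        show (i.1 ≤ j.1) ↔ (i'.1 < j.1)
        rw [hval]; omega)) (Equiv.refl Bool)) _ _ ?_
    intro t
    congr 1
    funext j
    by_cases h1 : j < i
    · have hji : j.1 < i.1 := h1
      rw [dif_pos h1]
      by_cases h2 : j < i'
      · rw [dif_pos h2]
      · have h3 : j = i' := by
          have : ¬ j.1 < i'.1 := h2
          exact Fin.ext (by rw [hval] at this ⊢; omega)
        rw [dif_neg h2, dif_pos h3, h3]
    · have hji : ¬ j.1 < i.1 := h1
      rw [dif_neg h1]
      have h2 : ¬ j < i' := by
        show ¬ j.1 < i'.1; rw [hval]; omega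
      have h3 : j ≠ i' := by
        intro h; apply hji; rw [h, hval]; omega
      rw [dif_neg h2, dif_neg h3]
      rfl
  · unfold honestG
    haveI : IsEmpty {j : Fin N // (⟨N - 1, Nat.sub_lt hN Nat.one_pos⟩ : Fin N) < j} :=
      ⟨fun j => by
        have h1 : (N : ℕ) - 1 < j.1.1 := j.2
        have h2 : j.1.1 < N := j.1.isLt
        omega⟩
    rw [Fintype.sum_unique]
    congr 1
    funext j
    by_cases h1 : j < (⟨N - 1, Nat.sub_lt hN Nat.one_pos⟩ : Fin N)
    · rw [dif_pos h1]
    · have h2 : j = ⟨N - 1, Nat.sub_lt hN Nat.one_pos⟩ := by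
        have h3 : ¬ j.1 < N - 1 := h1
        have h4 := j.isLt
        exact Fin.ext (show j.1 = N - 1 by omega)
      rw [dif_neg h1, dif_pos h2, h2]
end

section
/- Let q be a prime, N ≥ 1, d ≥ 0, and let F be an N-variate polynomial over F_q whose degree in each variable is at most d. Let a ∈ F_q with Σ_{x ∈ {0,1}^N} F(x) ≠ a. Then for every prover strategy (g_i)_{1≤i≤N}, the probability, over a uniformly random point (r₁,…,r_N) ∈ F_q^N, that all of the following checks pass is at most N·d/q: (i) g₁(0) + g₁(1) = a; (ii) for every 2 ≤ i ≤ N, g_i(r₁,…,r_{i−1})(0) + g_i(r₁,…,r_{i−1})(1) = g_{i−1}(r₁,…,r_{i−2})(r_{i−1}); and (iii) g_N(r₁,…,r_{N−1})(r_N) = F(r₁,…,r_N). -/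
/-!
Let `sᵢ(r)` be the honest prover's message in round `i`: `F` summed over the Boolean values of
the variables after `i`, with the variables before `i` set to `r` and the `i`-th one left as the
indeterminate. Then `sᵢ(r)(0) + sᵢ(r)(1) = sᵢ₋₁(r)(rᵢ₋₁)`, the first round sums to the true value
`Σ_{x ∈ {0,1}^N} F(x) ≠ a`, and the last message evaluates to `F(r)`. So if every check passes,
the prover's first message differs from `s₁`, and following the rounds there is a round `i` with
`gᵢ ≠ sᵢ` but `gᵢ(rᵢ) = sᵢ(rᵢ)`. The polynomial `gᵢ - sᵢ` has degree at most `d` and does not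
depend on `rᵢ`, so for each choice of the other coordinates at most `d` values of `rᵢ` make round
`i` go wrong in this way: at most `d qᴺ⁻¹` points per round, and `N d qᴺ⁻¹` in total.
-/

open Finset Polynomial Function

section PartialSum

variable {R S : Type*} [CommRing R] [DecidableEq R] [CommRing S] [DecidableEq S] {N : ℕ}

def prefixBox (k : ℕ) (r : Fin N → R) : Finset (Fin N → R) :=
  Fintype.piFinset fun j => if j.val < k then {r j} else {0, 1}

noncomputable def partialSum (F : MvPolynomial (Fin N) R) (k : ℕ) (r : Fin N → R) : R :=
  ∑ x ∈ prefixBox k r, MvPolynomial.eval x F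

variable (F : MvPolynomial (Fin N) R) (r : Fin N → R)

theorem partialSum_zero [Nontrivial R] :
    partialSum F 0 r = ∑ b : Fin N → Bool, MvPolynomial.eval (fun j => if b j then 1 else 0) F := by
  have hbox :
      prefixBox 0 r = univ.image fun (b : Fin N → Bool) j => if b j then (1 : R) else 0 := by
    rw [← Fintype.piFinset_univ, prefixBox,
      ← Fintype.piFinset_image (fun _ (b : Bool) => if b then (1 : R) else 0) fun _ => univ]
    congr 1
    ext j x
    simp [or_comm]
  rw [partialSum, hbox]
  exact sum_image fun b _ b' _ h => funext fun j => by
    have := congrFun h j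
    revert this
    cases b j <;> cases b' j <;> simp

theorem partialSum_eq_eval : partialSum F N r = MvPolynomial.eval r F := by
  simp [partialSum, prefixBox, Fintype.piFinset_singleton]

theorem partialSum_eq_add [Nontrivial R] (i : Fin N) :
    partialSum F i r =
      partialSum F (i + 1) (update r i 0) + partialSum F (i + 1) (update r i 1) := by
  have hbox : ∀ c ∈ ({0, 1} : Finset R),
      prefixBox (i + 1) (update r i c) = {x ∈ prefixBox i r | x i = c} := by
    intro c hc
    rw [prefixBox, prefixBox, ← Fintype.piFinset_update_singleton_eq_filter_piFinset_eq
      (fun j : Fin N => if j.val < i.val then {r j} else ({0, 1} : Finset R)) i (by simpa using hc)]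
    congr 1
    ext j : 1
    rcases eq_or_ne j i with rfl | hj
    · simp
    · have : j.val < i.val + 1 ↔ j.val < i.val := by have := Fin.val_ne_of_ne hj; omega
      simp [hj, this]
  rw [partialSum, partialSum, partialSum, hbox 0 (by simp), hbox 1 (by simp),
    ← sum_fiberwise_of_maps_to (g := fun x => x i) (t := {0, 1}), sum_pair zero_ne_one]
  intro x hx
  simpa using (Fintype.mem_piFinset.1 hx i)

theorem map_partialSum [Nontrivial S] (φ : R →+* S) (k : ℕ) :
    φ (partialSum F k r) = partialSum (F.map φ) k (φ ∘ r) := by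
  have hbox : (prefixBox k r).image (fun x j => φ (x j)) = prefixBox k (φ ∘ r) := by
    rw [prefixBox, prefixBox, ← Fintype.piFinset_image]
    congr 1
    ext j : 1
    split_ifs <;> simp
  -- `φ` is injective on each coordinate set of the box since it separates `0` and `1`.
  have hinj : Set.InjOn (fun x j => φ (x j)) (prefixBox k r : Set (Fin N → R)) := by
    intro x hx y hy h
    funext j
    have hxj := Fintype.mem_piFinset.1 hx j
    have hyj := Fintype.mem_piFinset.1 hy j
    have hφ := congrFun h j
    split_ifs at hxj hyj <;> simp at hxj hyj
    · rw [hxj, hyj]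
    · rcases hxj with hxj | hxj <;> rcases hyj with hyj | hyj <;> simp_all
  rw [partialSum, partialSum, map_sum, ← hbox, sum_image hinj]
  refine sum_congr rfl fun x _ => ?_
  rw [MvPolynomial.eval_map, MvPolynomial.eval₂_comp]
  rfl

end PartialSum

theorem natDegree_eval₂_C_le_degreeOf {σ R : Type*} [CommSemiring R] (F : MvPolynomial σ R)
    (i : σ) (x : σ → R[X]) (hx : ∀ j ≠ i, (x j).natDegree = 0) (hxi : (x i).natDegree ≤ 1) :
    (F.eval₂ C x).natDegree ≤ F.degreeOf i := by
  classical
  conv_lhs => rw [F.as_sum, MvPolynomial.eval₂_sum]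
  refine natDegree_sum_le_of_forall_le _ _ fun s hs => ?_
  rw [MvPolynomial.eval₂_monomial, Finsupp.prod]
  refine (natDegree_C_mul_le _ _).trans <| (natDegree_prod_le _ _).trans ?_
  calc ∑ j ∈ s.support, (x j ^ s j).natDegree
      ≤ ∑ j ∈ s.support, if j = i then s j else 0 := by
        refine sum_le_sum fun j _ => natDegree_pow_le.trans ?_
        split_ifs with h
        · subst h; simpa using Nat.mul_le_mul_left (s j) hxi
        · simp [hx j h]
    _ ≤ s i := by rw [sum_ite_eq']; split_ifs <;> simp
    _ ≤ F.degreeOf i := MvPolynomial.monomial_le_degreeOf i hs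

section RoundPoly

variable {K : Type*} [CommRing K] [DecidableEq K] {N : ℕ}
  (F : MvPolynomial (Fin N) K) (i : Fin N) (r : Fin N → K)

noncomputable def roundPoly : K[X] :=
  partialSum (F.map C) (i + 1) (update (C ∘ r) i X)

theorem roundPoly_update_self (c : K) : roundPoly F i (update r i c) = roundPoly F i r := by
  simp [roundPoly, comp_update]

theorem eval_roundPoly [Nontrivial K] (c : K) :
    (roundPoly F i r).eval c = partialSum F (i + 1) (update r i c) := by
  have hC : (evalRingHom c).comp C = RingHom.id K := RingHom.ext fun _ => eval_C
  rw [roundPoly, ← coe_evalRingHom, map_partialSum, MvPolynomial.map_map, hC, MvPolynomial.map_id]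
  congr 1
  funext j
  rcases eq_or_ne j i with rfl | hj <;> simp [*]

theorem eval_roundPoly_self [Nontrivial K] :
    (roundPoly F i r).eval (r i) = partialSum F (i + 1) r := by
  rw [eval_roundPoly, update_eq_self]

theorem eval_zero_add_eval_one_roundPoly [Nontrivial K] :
    (roundPoly F i r).eval 0 + (roundPoly F i r).eval 1 = partialSum F i r := by
  rw [eval_roundPoly, eval_roundPoly, partialSum_eq_add]

theorem natDegree_roundPoly_le : (roundPoly F i r).natDegree ≤ F.degreeOf i := by
  refine natDegree_sum_le_of_forall_le _ _ fun x hx => ?_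
  rw [MvPolynomial.eval_map]
  have hx := Fintype.mem_piFinset.1 hx
  refine natDegree_eval₂_C_le_degreeOf F i x (fun j hj => ?_) ?_
  · have hxj := hx j
    split_ifs at hxj <;> simp [hj] at hxj
    · simp [hxj]
    · rcases hxj with h | h <;> simp [h]
  · have hxi := hx i
    simp only [lt_add_one, if_true, update_self, mem_singleton] at hxi
    rw [hxi]
    exact natDegree_X_le

end RoundPoly

theorem exists_isRoot_sub_of_checks {K : Type*} [CommRing K] {n : ℕ} (hn : 0 < n)
    (G S : Fin n → K[X]) (r : Fin n → K)
    (h₀ : (G ⟨0, hn⟩).eval 0 + (G ⟨0, hn⟩).eval 1 ≠ (S ⟨0, hn⟩).eval 0 + (S ⟨0, hn⟩).eval 1)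
    (hG : ∀ (i : Fin n) (h : i.val + 1 < n),
      (G ⟨i + 1, h⟩).eval 0 + (G ⟨i + 1, h⟩).eval 1 = (G i).eval (r i))
    (hS : ∀ (i : Fin n) (h : i.val + 1 < n),
      (S ⟨i + 1, h⟩).eval 0 + (S ⟨i + 1, h⟩).eval 1 = (S i).eval (r i))
    (hlast : (G ⟨n - 1, Nat.sub_lt hn one_pos⟩).eval (r ⟨n - 1, Nat.sub_lt hn one_pos⟩) =
      (S ⟨n - 1, Nat.sub_lt hn one_pos⟩).eval (r ⟨n - 1, Nat.sub_lt hn one_pos⟩)) :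
    ∃ i, G i - S i ≠ 0 ∧ (G i - S i).IsRoot (r i) := by
  by_contra! hgood
  have hne : ∀ k (hk : k < n), G ⟨k, hk⟩ ≠ S ⟨k, hk⟩ := by
    intro k
    induction k with
    | zero => intro hk h; exact h₀ (by rw [h])
    | succ k ih =>
      intro hk h
      refine hgood ⟨k, by omega⟩ (sub_ne_zero.2 (ih _)) ?_
      rw [IsRoot.def, eval_sub, sub_eq_zero, ← hG ⟨k, _⟩ hk, ← hS ⟨k, _⟩ hk, h]
  exact hgood _ (sub_ne_zero.2 (hne _ _)) (by rw [IsRoot.def, eval_sub, sub_eq_zero, hlast])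

theorem card_filter_isRoot_le {ι K : Type*} [Fintype ι] [DecidableEq ι] [CommRing K] [IsDomain K]
    [Fintype K] [DecidableEq K] {d : ℕ} (i : ι) (p : (ι → K) → K[X])
    (hp : ∀ r c, p (update r i c) = p r) (hd : ∀ r, (p r).natDegree ≤ d) :
    #{r | p r ≠ 0 ∧ (p r).IsRoot (r i)} ≤ d * Fintype.card K ^ (Fintype.card ι - 1) := by
  have hbase : #{u ∈ Fintype.piFinset fun _ : ι => (univ : Finset K) | u i = 0} =
      Fintype.card K ^ (Fintype.card ι - 1) := by
    rw [Fintype.card_filter_piFinset_const_eq_of_mem _ _ (mem_univ 0), card_univ]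
  rw [← hbase]
  -- All points of the fibre over `u` share the polynomial `p u` and differ only in `r i`.
  refine card_le_mul_card_image_of_maps_to (f := fun r => update r i 0) (fun r _ => by simp) d
    fun u _ => ?_
  calc #{r ∈ {r | p r ≠ 0 ∧ (p r).IsRoot (r i)} | update r i 0 = u}
      ≤ #((p u).roots.toFinset.image (update u i)) := card_le_card ?_
    _ ≤ #(p u).roots.toFinset := card_image_le
    _ ≤ Multiset.card (p u).roots := Multiset.toFinset_card_le _
    _ ≤ d := (card_roots' _).trans (hd u)
  intro r hr
  simp only [mem_filter, mem_univ, true_and] at hr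
  obtain ⟨⟨hr0, hroot⟩, rfl⟩ := hr
  rw [hp]
  exact mem_image.2 ⟨r i, by rwa [Multiset.mem_toFinset, mem_roots hr0], by simp⟩

theorem div_pow_le_of_le_mul_pow_pred {c n m k : ℕ} (hk : 0 < k) (h : c ≤ n * (m * k ^ (n - 1))) :
    (c : ℝ) / k ^ n ≤ n * m / k := by
  rcases Nat.eq_zero_or_pos n with rfl | hn
  · simp_all
  rw [div_le_div_iff₀ (by positivity) (by positivity)]
  calc (c : ℝ) * k ≤ n * (m * k ^ (n - 1)) * k := by gcongr; exact_mod_cast h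
    _ = n * m * (k ^ (n - 1) * k) := by ring
    _ = n * m * k ^ n := by rw [← pow_succ, Nat.sub_add_cancel hn]

/-- Sumcheck soundness: let `F` be an `N`-variate polynomial over `F_q`
whose degree in each variable is at most `d`, and let `a ∈ F_q` with
`Σ_{x ∈ {0,1}^N} F(x) ≠ a`. Then for every prover strategy
`g_i : F_q^{i−1} → {univariate polynomials of degree ≤ d}`, the probability over a
uniformly random `(r₁,…,r_N) ∈ F_q^N` that all verifier checks pass is at most `N·d/q`. -/
theorem stmt_16 (q N d : ℕ) [Fact (Nat.Prime q)] (hN : 1 ≤ N)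
    (F : MvPolynomial (Fin N) (ZMod q))
    (hdeg : ∀ s ∈ F.support, ∀ j, s j ≤ d)
    (a : ZMod q)
    (ha : ∑ x : Fin N → Bool,
        MvPolynomial.eval (fun j => if x j then 1 else 0) F ≠ a)
    (g : (i : Fin N) → (Fin i.val → ZMod q) → Polynomial (ZMod q))
    (hg : ∀ i pre, (g i pre).natDegree ≤ d) :
    ((Finset.univ.filter (fun r : Fin N → ZMod q =>
        ((g ⟨0, hN⟩ fun j => r ⟨j.val, lt_trans j.isLt hN⟩).eval 0 +
            (g ⟨0, hN⟩ fun j => r ⟨j.val, lt_trans j.isLt hN⟩).eval 1 = a) ∧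
        (∀ i : Fin N, 0 < i.val →
          (g i fun j => r ⟨j.val, lt_trans j.isLt i.isLt⟩).eval 0 +
              (g i fun j => r ⟨j.val, lt_trans j.isLt i.isLt⟩).eval 1 =
            (g ⟨i.val - 1, Nat.lt_of_le_of_lt (Nat.sub_le _ _) i.isLt⟩
                fun j => r ⟨j.val,
                  lt_trans j.isLt (Nat.lt_of_le_of_lt (Nat.sub_le _ _) i.isLt)⟩).eval
              (r ⟨i.val - 1, Nat.lt_of_le_of_lt (Nat.sub_le _ _) i.isLt⟩)) ∧
        ((g ⟨N - 1, Nat.sub_lt hN Nat.one_pos⟩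
            fun j => r ⟨j.val, lt_trans j.isLt (Nat.sub_lt hN Nat.one_pos)⟩).eval
              (r ⟨N - 1, Nat.sub_lt hN Nat.one_pos⟩)
          = MvPolynomial.eval r F))).card : ℝ) / (q : ℝ) ^ N
      ≤ (N : ℝ) * (d : ℝ) / (q : ℝ) := by
  let G (r : Fin N → ZMod q) (i : Fin N) : (ZMod q)[X] :=
    g i fun j => r ⟨j.val, lt_trans j.isLt i.isLt⟩
  let bad (i : Fin N) : Finset (Fin N → ZMod q) :=
    {r | G r i - roundPoly F i r ≠ 0 ∧ (G r i - roundPoly F i r).IsRoot (r i)}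
  have hbad (i : Fin N) : #(bad i) ≤ d * q ^ (N - 1) := by
    have hdegF : F.degreeOf i ≤ d := MvPolynomial.degreeOf_le_iff.2 fun s hs => hdeg s hs i
    refine (card_filter_isRoot_le i (fun r => G r i - roundPoly F i r) (fun r c => ?_)
      fun r => ?_).trans_eq (by rw [ZMod.card, Fintype.card_fin])
    · have hprefix : (fun j : Fin i.val => update r i c ⟨j.val, lt_trans j.isLt i.isLt⟩) =
          fun j => r ⟨j.val, lt_trans j.isLt i.isLt⟩ :=
        funext fun j => update_of_ne (Fin.ne_of_val_ne (Nat.ne_of_lt j.isLt)) _ _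
      simp only [G, hprefix, roundPoly_update_self]
    · exact (natDegree_sub_le _ _).trans
        (max_le (hg _ _) ((natDegree_roundPoly_le F i r).trans hdegF))
  refine div_pow_le_of_le_mul_pow_pred (Fact.out : q.Prime).pos <|
    (card_le_card fun r hr => ?_).trans <|
      (card_biUnion_le_card_mul univ bad _ fun i _ => hbad i).trans_eq (by simp)
  obtain ⟨hstart, hround, hfinal⟩ := (mem_filter.1 hr).2
  refine mem_biUnion.2 ((exists_isRoot_sub_of_checks hN (G r) (roundPoly F · r) r ?_ ?_ ?_ ?_).imp
    fun i hi => ⟨mem_univ i, mem_filter.2 ⟨mem_univ r, hi⟩⟩)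
  · rw [hstart, eval_zero_add_eval_one_roundPoly, Fin.val_mk, partialSum_zero]
    exact ha.symm
  · exact fun i h => hround ⟨i + 1, h⟩ i.val.succ_pos
  · exact fun i h =>
      (eval_zero_add_eval_one_roundPoly F _ r).trans (eval_roundPoly_self F i r).symm
  · rw [hfinal, eval_roundPoly_self, Fin.val_mk, Nat.sub_add_cancel hN, partialSum_eq_eval]
end

section
/- Let q be a prime, m ≥ 1, k ≥ 1, and let G be a finite simple graph with vertex set {0,1}^m, adjacency indicator A : {0,1}^m × {0,1}^m → F_q, and multilinear extension Ã : F_q^m × F_q^m → F_q. Then, in F_q, Σ_{v₁,…,v_k ∈ {0,1}^m} ∏_{1≤i,j≤k, i≠j} Ã(v_i, v_j) equals the image in F_q of the natural number k! · C, where C is the number of k-cliques of G. -/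
/-- The embedding of the Boolean cube `{0,1}^m` into `F_q^m`. -/
def cubeEmb (q : ℕ) {m : ℕ} (z : Fin m → Bool) : Fin m → ZMod q :=
  fun ℓ => if z ℓ then 1 else 0

/-- The multilinear extension `Ã : F_q^m × F_q^m → F_q` of the adjacency indicator
`A : {0,1}^m × {0,1}^m → F_q` (where `A(u,v) = 1` iff `u` and `v` are adjacent):
`Ã(x,y) = Σ_{z,w ∈ {0,1}^m} A(z,w) · ∏_ℓ (x_ℓ·z_ℓ + (1−x_ℓ)(1−z_ℓ))·(y_ℓ·w_ℓ + (1−y_ℓ)(1−w_ℓ))`. -/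
def adjMle (q m : ℕ) [NeZero q] (G : SimpleGraph (Fin m → Bool)) [DecidableRel G.Adj]
    (x y : Fin m → ZMod q) : ZMod q :=
  ∑ z : Fin m → Bool, ∑ w : Fin m → Bool,
    (if G.Adj z w then (1 : ZMod q) else 0) *
      ∏ ℓ : Fin m,
        ((x ℓ * cubeEmb q z ℓ + (1 - x ℓ) * (1 - cubeEmb q z ℓ)) *
         (y ℓ * cubeEmb q w ℓ + (1 - y ℓ) * (1 - cubeEmb q w ℓ)))

/-
On cube points the factor `x z + (1 - x)(1 - z)` is the Kronecker delta of `x` and `z`, so `Ã`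
restricts to the adjacency indicator and the summand for `(v₁, …, v_k)` is `1` exactly when the
`v_i` are pairwise adjacent. As `G` is loopless such a tuple is an ordering of the `k`-clique
`{v₁, …, v_k}`, and every `k`-clique has `k!` orderings.
-/

open Finset
open scoped Nat

lemma prod_cubeEmb_mul_add_eq_ite (q : ℕ) {m : ℕ} (u z : Fin m → Bool) :
    ∏ ℓ, (cubeEmb q u ℓ * cubeEmb q z ℓ + (1 - cubeEmb q u ℓ) * (1 - cubeEmb q z ℓ))
      = if z = u then (1 : ZMod q) else 0 := by
  have hcoord (ℓ : Fin m) : cubeEmb q u ℓ * cubeEmb q z ℓ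
      + (1 - cubeEmb q u ℓ) * (1 - cubeEmb q z ℓ) = if z ℓ = u ℓ then (1 : ZMod q) else 0 := by
    cases hu : u ℓ <;> cases hz : z ℓ <;> simp [cubeEmb, hu, hz]
  simp only [hcoord, prod_boole, funext_iff, mem_univ, forall_const]

lemma adjMle_cubeEmb (q m : ℕ) [NeZero q] (G : SimpleGraph (Fin m → Bool)) [DecidableRel G.Adj]
    (u v : Fin m → Bool) :
    adjMle q m G (cubeEmb q u) (cubeEmb q v) = if G.Adj u v then 1 else 0 := by
  simp only [adjMle, prod_mul_distrib, prod_cubeEmb_mul_add_eq_ite, mul_ite, mul_one, mul_zero,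
    sum_ite_eq', mem_univ, if_true]

lemma Finset.card_filter_image_univ_eq {V : Type*} [Fintype V] [DecidableEq V] {k : ℕ}
    {s : Finset V} (hs : #s = k) :
    #{v : Fin k → V | univ.image v = s} = k ! := by
  let toEquiv (v : {v : Fin k → V // univ.image v = s}) : Fin k ≃ s :=
    Equiv.ofBijective (fun i => ⟨v.1 i, v.2.subset (mem_image_of_mem _ (mem_univ i))⟩) <| by
      refine (Fintype.bijective_iff_surjective_and_card _).2 ⟨?_, by simp [hs]⟩
      rintro ⟨x, hx⟩
      obtain ⟨i, -, rfl⟩ := mem_image.1 (v.2.symm ▸ hx)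
      exact ⟨i, rfl⟩
  let e : {v : Fin k → V // univ.image v = s} ≃ (Fin k ≃ s) :=
    { toFun := toEquiv
      invFun e := ⟨fun i => e i, by
        ext x
        simp only [mem_image, mem_univ, true_and]
        exact ⟨fun ⟨i, hi⟩ => hi ▸ (e i).2, fun hx => ⟨e.symm ⟨x, hx⟩, by simp⟩⟩⟩
      left_inv _ := rfl
      right_inv _ := by ext; rfl }
  rw [← Fintype.card_subtype, Fintype.card_congr e,
    Fintype.card_equiv (finCongr hs.symm |>.trans s.equivFin.symm), Fintype.card_fin]

namespace SimpleGraph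

variable {V : Type*} [DecidableEq V] (G : SimpleGraph V)

lemma isNClique_image_univ_iff {k : ℕ} (v : Fin k → V) :
    G.IsNClique k (univ.image v) ↔ ∀ i j, i ≠ j → G.Adj (v i) (v j) := by
  rw [isNClique_iff]
  constructor
  · rintro ⟨hclique, hcard⟩ i j hij
    have hinj : Set.InjOn v (univ : Finset (Fin k)) := by
      rw [← card_image_iff, hcard, Finset.card_univ, Fintype.card_fin]
    exact hclique (mem_image_of_mem _ (mem_univ i)) (mem_image_of_mem _ (mem_univ j))
      (hinj.ne (mem_univ i) (mem_univ j) hij)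
  · intro hadj
    have hinj : Function.Injective v := fun i j hv => by
      by_contra hij
      exact G.loopless.irrefl (v i) (hv ▸ hadj i j hij)
    refine ⟨?_, by rw [card_image_of_injective _ hinj, Finset.card_univ, Fintype.card_fin]⟩
    simp only [coe_image, coe_univ, Set.image_univ]
    rintro _ ⟨i, rfl⟩ _ ⟨j, rfl⟩ hne
    exact hadj i j (fun h => hne (h ▸ rfl))

variable [Fintype V] [DecidableRel G.Adj]

lemma card_pairwise_adj_tuples (k : ℕ) :
    #{v : Fin k → V | ∀ i j, i ≠ j → G.Adj (v i) (v j)} = k ! * #(G.cliqueFinset k) := by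
  simp_rw [← G.isNClique_image_univ_iff]
  rw [card_eq_sum_card_fiberwise (f := fun v => univ.image v) (t := G.cliqueFinset k)
    (fun v hv => by simpa using hv), mul_comm, ← smul_eq_mul, ← sum_const]
  refine sum_congr rfl fun s hs => ?_
  rw [mem_cliqueFinset_iff] at hs
  rw [filter_filter, ← card_filter_image_univ_eq hs.card_eq]
  congr 1
  ext v
  simp only [mem_filter, mem_univ, true_and, and_iff_right_iff_imp]
  rintro rfl
  exact hs

end SimpleGraph

theorem stmt_17_general (q m k : ℕ) [Fact (Nat.Prime q)]
    (G : SimpleGraph (Fin m → Bool)) [DecidableRel G.Adj] :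
    (∑ v : Fin k → (Fin m → Bool),
        ∏ p ∈ Finset.univ.filter (fun p : Fin k × Fin k => p.1 ≠ p.2),
          adjMle q m G (cubeEmb q (v p.1)) (cubeEmb q (v p.2)))
      = ((Nat.factorial k * (G.cliqueFinset k).card : ℕ) : ZMod q) := by
  simp only [adjMle_cubeEmb, prod_boole, mem_filter, mem_univ, true_and, Prod.forall]
  rw [sum_boole, G.card_pairwise_adj_tuples]

/-- for a finite simple graph `G` with vertex set `{0,1}^m` and
multilinear extension `Ã` of its adjacency indicator,
`Σ_{v₁,…,v_k ∈ {0,1}^m} ∏_{i≠j} Ã(v_i, v_j)` equals (the image in `F_q` of)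
`k! · C`, where `C` is the number of `k`-cliques of `G`. -/
theorem stmt_17 (q m k : ℕ) [Fact (Nat.Prime q)] (hm : 1 ≤ m) (hk : 1 ≤ k)
    (G : SimpleGraph (Fin m → Bool)) [DecidableRel G.Adj] :
    (∑ v : Fin k → (Fin m → Bool),
        ∏ p ∈ Finset.univ.filter (fun p : Fin k × Fin k => p.1 ≠ p.2),
          adjMle q m G (cubeEmb q (v p.1)) (cubeEmb q (v p.2)))
      = ((Nat.factorial k * (G.cliqueFinset k).card : ℕ) : ZMod q) :=
  stmt_17_general q m k G
end
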